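/- arXiv:math/0503545 — 3 statements merged into one kernel-verified Lean document; each statement's English description precedes it below -/
import Mathlib

section
/- Let f ≥ 1 be an integer. Then the symmetric group S_{2f} is the disjoint union of the right cosets Ψ·d, d ∈ D_f: S_{2f} = ⊔_{d∈D_f} Ψd. -/
open scoped BigOperators Classical
open MulOpposite

noncomputable section

namespace SpBrauer

/-- the conjugate index `i' = 2m-1-i` (0-based version of `2m+1-i`). -/
def conjIdx (m : ℕ) (i : Fin (2*m)) : Fin (2*m) :=
  ⟨2*m - 1 - (i : ℕ), by have := i.isLt; omega⟩

/-- the sign `ε_{ij}`. -/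
def epsZ (m : ℕ) (i j : Fin (2*m)) : ℤ :=
  if (i : ℕ) + (j : ℕ) + 1 = 2*m then (if (i : ℕ) < (j : ℕ) then 1 else -1) else 0

/-- tensor space `V^{⊗ n}` modelled as the free module on multi-indices. -/
abbrev Ten (R : Type) (m n : ℕ) : Type := (Fin n → Fin (2*m)) → R

/-- basis tensor `v_{i_1} ⊗ ⋯ ⊗ v_{i_n}`. -/
def dta (R : Type) [CommRing R] (m n : ℕ) (i : Fin n → Fin (2*m)) : Ten R m n :=
  fun a => if a = i then 1 else 0

/-- the linear map on free modules with "matrix" `M`. -/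
def funMap (R : Type) [CommRing R] (α β : Type) [Fintype α]
    (M : β → α → R) : (α → R) →ₗ[R] (β → R) where
  toFun f := fun b => ∑ a, M b a * f a
  map_add' f g := by
    funext b
    simp [Pi.add_apply, mul_add, Finset.sum_add_distrib]
  map_smul' c f := by
    funext b
    simp only [Pi.smul_apply, smul_eq_mul, RingHom.id_apply]
    rw [Finset.mul_sum]
    exact Finset.sum_congr rfl (fun a _ => by ring)

/-- the operator given by the right action of the Brauer algebra generator `s_j`
(`j` is 0-based: `s_j` swaps positions `j` and `j+1` with a sign). -/
def sOp (R : Type) [CommRing R] (m n : ℕ) (j : Fin (n-1)) :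
    Ten R m n →ₗ[R] Ten R m n :=
  funMap R _ _ (fun a b =>
    if b = a ∘ (Equiv.swap (⟨(j:ℕ), by have := j.isLt; omega⟩ : Fin n)
        (⟨(j:ℕ)+1, by have := j.isLt; omega⟩ : Fin n)) then -1 else 0)

/-- the operator given by the right action of the Brauer algebra generator `e_j`. -/
def eOp (R : Type) [CommRing R] (m n : ℕ) (j : Fin (n-1)) :
    Ten R m n →ₗ[R] Ten R m n :=
  funMap R _ _ (fun a b =>
    (if ∀ p : Fin n, p ≠ (⟨(j:ℕ), by have := j.isLt; omega⟩ : Fin n) →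
        p ≠ (⟨(j:ℕ)+1, by have := j.isLt; omega⟩ : Fin n) → b p = a p then 1 else 0) *
    (-((epsZ m (a ⟨(j:ℕ), by have := j.isLt; omega⟩) (a ⟨(j:ℕ)+1, by have := j.isLt; omega⟩) : ℤ) : R)) *
    ((epsZ m (b ⟨(j:ℕ), by have := j.isLt; omega⟩) (b ⟨(j:ℕ)+1, by have := j.isLt; omega⟩) : ℤ) : R))

/-- the (sign-twisted) right place-permutation action of a permutation on tensor space. -/
def permOp (R : Type) [CommRing R] (m n : ℕ) (π : Equiv.Perm (Fin n)) :
    Ten R m n →ₗ[R] Ten R m n :=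
  funMap R _ _ (fun a b => if b = a ∘ π then ((Equiv.Perm.sign π : ℤ) : R) else 0)

/-- the `n`-fold tensor power of (the endomorphism of `V` given by) a matrix `g`,
acting diagonally on tensor space. -/
def tenOp (R : Type) [CommRing R] (m n : ℕ) (g : Matrix (Fin (2*m)) (Fin (2*m)) R) :
    Ten R m n →ₗ[R] Ten R m n :=
  funMap R _ _ (fun a b => ∏ k : Fin n, g (a k) (b k))

/-- the skew-symmetric bilinear form `(v,w)` determined by `(v_i, v_j) = ε_{ij}`. -/
def sform (R : Type) [CommRing R] (m : ℕ) (v w : Fin (2*m) → R) : R :=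
  ∑ i, ∑ j, v i * ((epsZ m i j : ℤ) : R) * w j

/-- membership in the symplectic group `Sp(V)` (an invertible linear map preserving the form). -/
def IsSymp (R : Type) [CommRing R] (m : ℕ) (g : Matrix (Fin (2*m)) (Fin (2*m)) R) : Prop :=
  IsUnit g.det ∧ ∀ v w, sform R m (g.mulVec v) (g.mulVec w) = sform R m v w

/-- membership in the symplectic similitude group `GSp(V)`. -/
def IsGSymp (R : Type) [CommRing R] (m : ℕ) (g : Matrix (Fin (2*m)) (Fin (2*m)) R) : Prop :=
  IsUnit g.det ∧ ∃ d : R, d ≠ 0 ∧ ∀ v w, sform R m (g.mulVec v) (g.mulVec w) = d * sform R m v w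

/-! ### The Brauer algebra, by generators and relations -/

/-- generators of the Brauer algebra `B_n(x)`:  `s i` and `e i` for `i = 0, …, n-2`
(0-based versions of `s_1, …, s_{n-1}`, `e_1, …, e_{n-1}`). -/
inductive BGen (n : ℕ) : Type
  | s : Fin (n-1) → BGen n
  | e : Fin (n-1) → BGen n

/-- the defining relations of the Brauer algebra `B_n(x)`. -/
inductive BRel (R : Type) [CommRing R] (x : R) (n : ℕ) :
    FreeAlgebra R (BGen n) → FreeAlgebra R (BGen n) → Prop
  | ss (i : Fin (n-1)) :
      BRel R x n (FreeAlgebra.ι R (BGen.s i) * FreeAlgebra.ι R (BGen.s i)) 1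
  | ee (i : Fin (n-1)) :
      BRel R x n (FreeAlgebra.ι R (BGen.e i) * FreeAlgebra.ι R (BGen.e i))
        (x • FreeAlgebra.ι R (BGen.e i))
  | es (i : Fin (n-1)) :
      BRel R x n (FreeAlgebra.ι R (BGen.e i) * FreeAlgebra.ι R (BGen.s i))
        (FreeAlgebra.ι R (BGen.e i))
  | se (i : Fin (n-1)) :
      BRel R x n (FreeAlgebra.ι R (BGen.s i) * FreeAlgebra.ι R (BGen.e i))
        (FreeAlgebra.ι R (BGen.e i))
  | ssComm (i j : Fin (n-1)) (h : (i:ℕ)+1 < (j:ℕ)) :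
      BRel R x n (FreeAlgebra.ι R (BGen.s i) * FreeAlgebra.ι R (BGen.s j))
        (FreeAlgebra.ι R (BGen.s j) * FreeAlgebra.ι R (BGen.s i))
  | seComm (i j : Fin (n-1)) (h : (i:ℕ)+1 < (j:ℕ)) :
      BRel R x n (FreeAlgebra.ι R (BGen.s i) * FreeAlgebra.ι R (BGen.e j))
        (FreeAlgebra.ι R (BGen.e j) * FreeAlgebra.ι R (BGen.s i))
  | eeComm (i j : Fin (n-1)) (h : (i:ℕ)+1 < (j:ℕ)) :
      BRel R x n (FreeAlgebra.ι R (BGen.e i) * FreeAlgebra.ι R (BGen.e j))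
        (FreeAlgebra.ι R (BGen.e j) * FreeAlgebra.ι R (BGen.e i))
  | braid (i j : Fin (n-1)) (h : (j:ℕ) = (i:ℕ)+1) :
      BRel R x n
        (FreeAlgebra.ι R (BGen.s i) * FreeAlgebra.ι R (BGen.s j) * FreeAlgebra.ι R (BGen.s i))
        (FreeAlgebra.ι R (BGen.s j) * FreeAlgebra.ι R (BGen.s i) * FreeAlgebra.ι R (BGen.s j))
  | eje (i j : Fin (n-1)) (h : (j:ℕ) = (i:ℕ)+1) :
      BRel R x n
        (FreeAlgebra.ι R (BGen.e i) * FreeAlgebra.ι R (BGen.e j) * FreeAlgebra.ι R (BGen.e i))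
        (FreeAlgebra.ι R (BGen.e i))
  | eje' (i j : Fin (n-1)) (h : (j:ℕ) = (i:ℕ)+1) :
      BRel R x n
        (FreeAlgebra.ι R (BGen.e j) * FreeAlgebra.ι R (BGen.e i) * FreeAlgebra.ι R (BGen.e j))
        (FreeAlgebra.ι R (BGen.e j))
  | see (i j : Fin (n-1)) (h : (j:ℕ) = (i:ℕ)+1) :
      BRel R x n
        (FreeAlgebra.ι R (BGen.s i) * FreeAlgebra.ι R (BGen.e j) * FreeAlgebra.ι R (BGen.e i))
        (FreeAlgebra.ι R (BGen.s j) * FreeAlgebra.ι R (BGen.e i))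
  | ees (i j : Fin (n-1)) (h : (j:ℕ) = (i:ℕ)+1) :
      BRel R x n
        (FreeAlgebra.ι R (BGen.e j) * FreeAlgebra.ι R (BGen.e i) * FreeAlgebra.ι R (BGen.s j))
        (FreeAlgebra.ι R (BGen.e j) * FreeAlgebra.ι R (BGen.s i))

/-- the Brauer algebra `B_n(x)` over `R`, presented by generators and relations. -/
abbrev BrauerAlg (R : Type) [CommRing R] (x : R) (n : ℕ) : Type := RingQuot (BRel R x n)

/-- the generator `s_i` of the Brauer algebra (0-based index). -/
def bS (R : Type) [CommRing R] (x : R) (n : ℕ) (i : Fin (n-1)) : BrauerAlg R x n :=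
  RingQuot.mkAlgHom R (BRel R x n) (FreeAlgebra.ι R (BGen.s i))

/-- the generator `e_i` of the Brauer algebra (0-based index). -/
def bE (R : Type) [CommRing R] (x : R) (n : ℕ) (i : Fin (n-1)) : BrauerAlg R x n :=
  RingQuot.mkAlgHom R (BRel R x n) (FreeAlgebra.ι R (BGen.e i))

/-- the element `E_f = e_1 e_3 ⋯ e_{2f-1}` of the Brauer algebra. -/
def EfB (R : Type) [CommRing R] (x : R) (n f : ℕ) (hf : 2*f ≤ n) : BrauerAlg R x n :=
  (List.ofFn (fun i : Fin f => bE R x n ⟨2*(i:ℕ), by have := i.isLt; omega⟩)).prod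

/-- the two-sided ideal `B^{(f)}` of the Brauer algebra generated by `E_f`
(it is `0` when `2f > n`, matching the convention of the paper). -/
def Bideal (R : Type) [CommRing R] (x : R) (n f : ℕ) : Submodule R (BrauerAlg R x n) :=
  Submodule.span R {y | ∃ (hf : 2*f ≤ n) (a b : BrauerAlg R x n), y = a * EfB R x n f hf * b}

/-- the operator on tensor space given by the right action of `E_f = e_1e_3⋯e_{2f-1}`. -/
def EfOp (R : Type) [CommRing R] (m n f : ℕ) (hf : 2*f ≤ n) :
    Module.End R (Ten R m n) :=
  (List.ofFn (fun i : Fin f => eOp R m n ⟨2*(i:ℕ), by have := i.isLt; omega⟩)).prod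

/-! ### Combinatorial predicates -/

/-- `σ ∈ S_{{2f+1, …, n}}`, i.e. `σ` fixes `1, …, 2f` pointwise (0-based). -/
def FixLow (n f : ℕ) (σ : Equiv.Perm (Fin n)) : Prop :=
  ∀ a : Fin n, (a:ℕ) < 2*f → σ a = a

/-- `σ ∈ S_{2f} = S_{{1, …, 2f}}`, i.e. `σ` fixes `2f+1, …, n` pointwise (0-based). -/
def FixHigh (n f : ℕ) (σ : Equiv.Perm (Fin n)) : Prop :=
  ∀ a : Fin n, 2*f ≤ (a:ℕ) → σ a = a

/-- membership in `D_{ν_f}`:  the bitableau `t^{ν_f}·d` is row standard and the first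
column of its first component is increasing (everything 0-based; `d a` is the entry
at the cell of `t^{ν_f}` containing `a`). -/
def DnuP (n f : ℕ) (d : Equiv.Perm (Fin n)) : Prop :=
  (∀ a b : Fin n, (a:ℕ) % 2 = 0 → (b:ℕ) = (a:ℕ)+1 → (b:ℕ) < 2*f → d a < d b) ∧
  (∀ a b : Fin n, (a:ℕ) % 2 = 0 → (b:ℕ) % 2 = 0 → (a:ℕ) < (b:ℕ) → (b:ℕ) < 2*f → d a < d b) ∧
  (∀ a b : Fin n, 2*f ≤ (a:ℕ) → (b:ℕ) = (a:ℕ)+1 → d a < d b)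

/-- membership in `D_f = D_{ν_f} ∩ S_{2f}`. -/
def DfP (n f : ℕ) (d : Equiv.Perm (Fin n)) : Prop :=
  DnuP n f d ∧ FixHigh n f d

/-- membership in the row stabilizer `S_{(2^f)}` of the initial `(2^f)`-tableau
(whose rows are `{1,2}, {3,4}, …, {2f-1,2f}`), inside `S_{2f} ≤ S_n`. -/
def RowStabP (n f : ℕ) (w : Equiv.Perm (Fin n)) : Prop :=
  FixHigh n f w ∧ ∀ a : Fin n, ((w a : ℕ))/2 = (a:ℕ)/2

/-- membership in `Ψ`, the normalizer of `S_{(2^f)}` in `S_{2f}`. -/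
def PsiP (n f : ℕ) (z : Equiv.Perm (Fin n)) : Prop :=
  FixHigh n f z ∧ ∀ w, RowStabP n f w ↔ RowStabP n f (z * w * z⁻¹)

/-- `d_J` for a `2f`-element subset `J ⊆ {1, …, n}`:  the unique permutation
enumerating `J` increasingly on the first `2f` positions and the complement of `J`
increasingly on the remaining positions. -/
def IsdJ (n f : ℕ) (J : Finset (Fin n)) (d : Equiv.Perm (Fin n)) : Prop :=
  (∀ a : Fin n, ((a:ℕ) < 2*f → d a ∈ J) ∧ (2*f ≤ (a:ℕ) → d a ∉ J)) ∧
  (∀ a b : Fin n, (a:ℕ) < (b:ℕ) → (b:ℕ) < 2*f → d a < d b) ∧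
  (∀ a b : Fin n, 2*f ≤ (a:ℕ) → (a:ℕ) < (b:ℕ) → d a < d b)

/-- membership in `S_{(2f, n-2f)} = S_{{1,…,2f}} × S_{{2f+1,…,n}}`. -/
def BlockP (n f : ℕ) (d : Equiv.Perm (Fin n)) : Prop :=
  ∀ a : Fin n, (a:ℕ) < 2*f ↔ ((d a : ℕ)) < 2*f

/-- the multi-index `c = (1, 1', 2, 2', …, f, f')`, completed by an
arbitrary multi-index `kk` on the positions `> 2f`. -/
def cIdx (m n f : ℕ) (hfm : f ≤ m) (kk : Fin n → Fin (2*m)) : Fin n → Fin (2*m) :=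
  fun p => if h : (p:ℕ) < 2*f then
    (if (p:ℕ) % 2 = 0 then (⟨(p:ℕ)/2, by omega⟩ : Fin (2*m))
     else conjIdx m ⟨(p:ℕ)/2, by omega⟩)
  else kk p

/-- the multi-index `ĉ = (f+1, (f+1)', …, 2f, (2f)') ∈ I(2m, 2f)`. -/
def cHatIdx (m f : ℕ) (hfm : 2*f ≤ m) : Fin (2*f) → Fin (2*m) :=
  fun p => if (p:ℕ) % 2 = 0 then (⟨f + (p:ℕ)/2, by have := p.isLt; omega⟩ : Fin (2*m))
           else conjIdx m ⟨f + (p:ℕ)/2, by have := p.isLt; omega⟩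

/-- membership in `I_f` (only the values at positions `> 2f` matter):
`2f+1 ≤ kk p ≤ m` (1-based) for all positions `p > 2f`. -/
def IfP (m n f : ℕ) (kk : Fin n → Fin (2*m)) : Prop :=
  ∀ p : Fin n, 2*f ≤ (p:ℕ) → 2*f ≤ ((kk p : ℕ)) ∧ ((kk p : ℕ)) < m

/-- the weight of a multi-index. -/
def wtOf (m k : ℕ) (a : Fin k → Fin (2*m)) : Fin (2*m) → ℕ :=
  fun j => (Finset.univ.filter (fun p => a p = j)).card

/-- the weight-`μ` component of an element of tensor space. -/
def wcomp (R : Type) [CommRing R] (m k : ℕ) (μ : Fin (2*m) → ℕ) (w : Ten R m k) :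
    Ten R m k :=
  fun a => if wtOf m k a = μ then w a else 0

/-- partial sums of a partition. -/
def psum (l : ℕ → ℕ) (r : ℕ) : ℕ := ∑ i ∈ Finset.range r, l i

/-- `l` represents a partition of `n - 2f` (parts listed weakly decreasingly). -/
def PartP (n f : ℕ) (l : ℕ → ℕ) : Prop :=
  (∀ i, l (i+1) ≤ l i) ∧ psum l n = n - 2*f ∧ ∀ i, n ≤ i → l i = 0

/-- membership in the Young subgroup `S_λ ≤ S_{{2f+1, …, n}}` stabilizing the rows of
the initial `λ`-tableau `t^λ` (with entries `2f+1, …, n`). -/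
def InSlam (n f : ℕ) (l : ℕ → ℕ) (w : Equiv.Perm (Fin n)) : Prop :=
  (∀ a : Fin n, (a:ℕ) < 2*f → w a = a) ∧
  (∀ (a : Fin n) (r : ℕ), 2*f + psum l r ≤ (a:ℕ) → (a:ℕ) < 2*f + psum l (r+1) →
     2*f + psum l r ≤ ((w a : ℕ)) ∧ ((w a : ℕ)) < 2*f + psum l (r+1))

/-- `d = d(t)` for a standard `λ`-tableau `t` with entries `2f+1, …, n`, i.e.
`d ∈ S_{{2f+1,…,n}}` and `t^λ · d` is standard. -/
def StdP (n f : ℕ) (l : ℕ → ℕ) (d : Equiv.Perm (Fin n)) : Prop :=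
  FixLow n f d ∧
  (∀ (a b : Fin n) (r c : ℕ), (a:ℕ) = 2*f + psum l r + c → c+1 < l r →
     (b:ℕ) = (a:ℕ)+1 → d a < d b) ∧
  (∀ (a b : Fin n) (r c : ℕ), (a:ℕ) = 2*f + psum l r + c → c < l (r+1) →
     (b:ℕ) = 2*f + psum l (r+1) + c → d a < d b)

/-- the embedding of the index set of the basis of `V` into that of `Ṽ`
(`v_i ↦ ṽ_i`, `v_{i'} ↦ ṽ_{i'}`). -/
def embIdx (m m0 : ℕ) (h : m ≤ m0) : Fin (2*m) → Fin (2*m0) :=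
  fun j => if (j:ℕ) < m then ⟨(j:ℕ), by have := j.isLt; omega⟩
           else ⟨(j:ℕ) + 2*(m0 - m), by have := j.isLt; omega⟩

/-- the inclusion `V^{⊗n} ↪ Ṽ^{⊗n}`. -/
def inclT (R : Type) [CommRing R] (m m0 n : ℕ) (h : m ≤ m0) :
    Ten R m n →ₗ[R] Ten R m0 n :=
  funMap R _ _ (fun (b : Fin n → Fin (2*m0)) (a : Fin n → Fin (2*m)) =>
    if b = embIdx m m0 h ∘ a then 1 else 0)

/-- the projection `π_K : Ṽ^{⊗n} ↠ V^{⊗n}` killing all basis tensors containing a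
factor `ṽ_i` or `ṽ_{i'}` with `m+1 ≤ i ≤ m_0`. -/
def projT (R : Type) [CommRing R] (m m0 n : ℕ) (h : m ≤ m0) :
    Ten R m0 n →ₗ[R] Ten R m n :=
  funMap R _ _ (fun (a : Fin n → Fin (2*m)) (b : Fin n → Fin (2*m0)) =>
    if b = embIdx m m0 h ∘ a then 1 else 0)


/-!
`Ψ` is the group of permutations carrying rows of `t^{(2^f)}` to rows, so right
multiplication by `Ψ` permutes the entries inside each row of `t^{(2^f)}·w` and permutes the
rows. Sorting each row and then ordering the rows by their first entries produces an element of
`D_f` in the coset of `w`; conversely an element of `Ψ` relating two elements of `D_f` must keep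
every row in place (rows are sorted) and fix the row order (first column is increasing), so it
is the identity.
-/

open Equiv

section FiberPreserving

variable {α β : Type*}

def fiberStabilizer (r : α → β) : Subgroup (Perm α) where
  carrier := {w | ∀ a, r (w a) = r a}
  one_mem' _ := rfl
  mul_mem' hv hw a := (hv _).trans (hw a)
  inv_mem' {w} hw a := by simpa using (hw (w⁻¹ a)).symm

lemma mem_fiberStabilizer {r : α → β} {w : Perm α} :
    w ∈ fiberStabilizer r ↔ ∀ a, r (w a) = r a := Iff.rfl

def fiberPreserving (r : α → β) : Subgroup (Perm α) where
  carrier := {z | ∀ a b, r (z a) = r (z b) ↔ r a = r b}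
  one_mem' _ _ := Iff.rfl
  mul_mem' hy hz a b := (hy _ _).trans (hz a b)
  inv_mem' {z} hz a b := by simpa using (hz (z⁻¹ a) (z⁻¹ b)).symm

lemma mem_fiberPreserving_of_comp_eq {r : α → β} {z : Perm α} {σ : β → β}
    (hσ : Function.Injective σ) (h : ∀ a, r (z a) = σ (r a)) : z ∈ fiberPreserving r :=
  fun a b => by rw [h, h, hσ.eq_iff]

/-- If `r a = r b` then `swap a b` stabilizes the fibres of `r`, and conjugating it by `z`
gives `swap (z a) (z b)`. -/
theorem normalizer_fiberStabilizer [DecidableEq α] (r : α → β) :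
    Subgroup.normalizer (fiberStabilizer r : Set (Perm α)) = fiberPreserving r := by
  have maps_fiber : ∀ z ∈ Subgroup.normalizer (fiberStabilizer r : Set (Perm α)),
      ∀ a b, r a = r b → r (z a) = r (z b) := by
    intro z hz a b hab
    have hswap : swap a b ∈ fiberStabilizer r := fun c => by
      rcases eq_or_ne c a with rfl | hca
      · simp [hab]
      rcases eq_or_ne c b with rfl | hcb
      · simp [hab]
      · rw [swap_apply_of_ne_of_ne hca hcb]
    have := (Subgroup.mem_normalizer_iff.mp hz _).mp hswap (z b)
    rwa [← swap_apply_apply, swap_apply_right] at this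
  ext z
  refine ⟨fun hz a b => ⟨fun h => ?_, maps_fiber z hz a b⟩, fun hz => ?_⟩
  · simpa using maps_fiber z⁻¹ (inv_mem hz) _ _ h
  · refine Subgroup.mem_normalizer_iff.mpr fun w => ?_
    simp only [mem_fiberStabilizer, Perm.mul_apply]
    exact ⟨fun hw a => by simpa using (hz _ _).mpr (hw (z⁻¹ a)),
      fun hw a => by simpa [hz _ _] using hw (z a)⟩

end FiberPreserving

section Tableau

variable {f : ℕ}

/-- The initial tableau `t^{(2^f)}` as the bijection from cells (row `k`, column `i`, both
0-based) to entries: cell `(k, i)` holds `2k + i`. -/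
def initTableau (f : ℕ) : Fin f × Fin 2 ≃ Fin (2 * f) :=
  finProdFinEquiv.trans (finCongr (Nat.mul_comm f 2))

lemma initTableau_val (k : Fin f) (i : Fin 2) : (initTableau f (k, i) : ℕ) = i + 2 * k := rfl

def tableauRow (a : Fin (2 * f)) : Fin f := ((initTableau f).symm a).1

lemma tableauRow_val (a : Fin (2 * f)) : (tableauRow a : ℕ) = a / 2 := by
  simp [tableauRow, initTableau]

@[simp]
lemma tableauRow_initTableau (k : Fin f) (i : Fin 2) :
    tableauRow (initTableau f (k, i)) = k := by
  simp [tableauRow]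

lemma exists_eq_initTableau_tableauRow (a : Fin (2 * f)) :
    ∃ i, a = initTableau f (tableauRow a, i) :=
  ⟨((initTableau f).symm a).2, by rw [tableauRow, Prod.mk.eta, Equiv.apply_symm_apply]⟩

lemma psiP_iff_mem_fiberPreserving (z : Perm (Fin (2 * f))) :
    PsiP (2 * f) f z ↔ z ∈ fiberPreserving tableauRow := by
  have fixHigh : ∀ w, FixHigh (2 * f) f w := fun w a ha => absurd a.isLt (by omega)
  have rowStabP_iff (w : Perm (Fin (2 * f))) :
      RowStabP (2 * f) f w ↔ w ∈ fiberStabilizer tableauRow := by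
    simp [RowStabP, fixHigh w, mem_fiberStabilizer, Fin.ext_iff, tableauRow_val]
  rw [← normalizer_fiberStabilizer, PsiP, Subgroup.mem_normalizer_iff]
  simp [fixHigh, rowStabP_iff]

structure IsSortedTableau (d : Perm (Fin (2 * f))) : Prop where
  row_lt : ∀ k, d (initTableau f (k, 0)) < d (initTableau f (k, 1))
  firstCol_strictMono : StrictMono fun k => d (initTableau f (k, 0))

lemma dfP_iff_isSortedTableau (d : Perm (Fin (2 * f))) :
    DfP (2 * f) f d ↔ IsSortedTableau d := by
  refine ⟨fun ⟨⟨hrow, hcol, _⟩, _⟩ => ⟨fun k => ?_, fun k l hkl => ?_⟩,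
    fun ⟨hrow, hcol⟩ =>
      ⟨⟨fun a b ha hb hbf => ?_, fun a b ha hb hab hbf => ?_, ?_⟩, ?_⟩⟩
  · exact hrow _ _ (by simp [initTableau_val]) (by simp [initTableau_val]; omega)
      (by simp [initTableau_val]; omega)
  · rw [Fin.lt_def] at hkl
    exact hcol _ _ (by simp [initTableau_val]) (by simp [initTableau_val])
      (by simpa [initTableau_val]) (by simp [initTableau_val])
  · obtain ⟨⟨k, i⟩, rfl⟩ := (initTableau f).surjective a
    obtain ⟨⟨l, j⟩, rfl⟩ := (initTableau f).surjective b
    simp only [initTableau_val] at ha hb hbf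
    obtain ⟨rfl, rfl, rfl⟩ : i = 0 ∧ j = 1 ∧ l = k := by
      refine ⟨Fin.ext ?_, Fin.ext ?_, Fin.ext ?_⟩ <;> omega
    exact hrow _
  · obtain ⟨⟨k, i⟩, rfl⟩ := (initTableau f).surjective a
    obtain ⟨⟨l, j⟩, rfl⟩ := (initTableau f).surjective b
    simp only [initTableau_val] at ha hb hab
    obtain ⟨rfl, rfl⟩ : i = 0 ∧ j = 0 := by
      refine ⟨Fin.ext ?_, Fin.ext ?_⟩ <;> omega
    exact hcol (by simp only [Fin.lt_def]; omega)
  · exact fun a b ha => absurd a.isLt (by omega)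
  · exact fun a ha => absurd a.isLt (by omega)

def cellPerm (σ : Perm (Fin f)) (t : Fin f → Perm (Fin 2)) : Perm (Fin (2 * f)) :=
  ((initTableau f).symm.trans (prodShear σ t)).trans (initTableau f)

lemma cellPerm_initTableau (σ : Perm (Fin f)) (t : Fin f → Perm (Fin 2)) (k : Fin f)
    (i : Fin 2) : cellPerm σ t (initTableau f (k, i)) = initTableau f (σ k, t k i) := by
  simp [cellPerm]

lemma cellPerm_mem_fiberPreserving (σ : Perm (Fin f)) (t : Fin f → Perm (Fin 2)) :
    cellPerm σ t ∈ fiberPreserving tableauRow :=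
  mem_fiberPreserving_of_comp_eq σ.injective fun a => by
    obtain ⟨⟨k, i⟩, rfl⟩ := (initTableau f).surjective a
    simp [cellPerm_initTableau]

section Existence

variable (w : Perm (Fin (2 * f)))

def rowSorter (k : Fin f) : Perm (Fin 2) :=
  if w (initTableau f (k, 0)) < w (initTableau f (k, 1)) then 1 else swap 0 1

lemma rowSorter_lt (k : Fin f) :
    w (initTableau f (k, rowSorter w k 0)) < w (initTableau f (k, rowSorter w k 1)) := by
  unfold rowSorter
  split_ifs with h
  · exact h
  · refine lt_of_le_of_ne (not_lt.mp h) fun heq => ?_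
    simpa using congrArg Prod.snd ((initTableau f).injective (w.injective heq))

def rowMin (k : Fin f) : Fin (2 * f) := w (initTableau f (k, rowSorter w k 0))

lemma rowMin_injective : Function.Injective (rowMin w) := fun k l h => by
  simpa using congrArg tableauRow (w.injective h)

theorem exists_isSortedTableau_mul :
    ∃ z ∈ fiberPreserving tableauRow, IsSortedTableau (w * z) := by
  set σ := Tuple.sort (rowMin w)
  refine ⟨cellPerm σ fun k => rowSorter w (σ k), cellPerm_mem_fiberPreserving _ _,
    fun k => by simpa [cellPerm_initTableau] using rowSorter_lt w (σ k), ?_⟩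
  have firstCol : (fun k => (w * cellPerm σ fun k => rowSorter w (σ k)) (initTableau f (k, 0)))
      = rowMin w ∘ σ := by
    ext k
    simp [cellPerm_initTableau, rowMin]
  rw [firstCol]
  exact (Tuple.monotone_sort _).strictMono_of_injective ((rowMin_injective w).comp σ.injective)

end Existence

section Uniqueness

variable {z : Perm (Fin (2 * f))}

lemma exists_row_of_mem_fiberPreserving (hz : z ∈ fiberPreserving tableauRow) (k : Fin f) :
    ∃ j, (z (initTableau f (k, 0)) = initTableau f (j, 0) ∧
        z (initTableau f (k, 1)) = initTableau f (j, 1)) ∨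
      (z (initTableau f (k, 0)) = initTableau f (j, 1) ∧
        z (initTableau f (k, 1)) = initTableau f (j, 0)) := by
  set j := tableauRow (z (initTableau f (k, 0)))
  have hrow : tableauRow (z (initTableau f (k, 1))) = j := (hz _ _).mpr (by simp)
  obtain ⟨i, hi⟩ := exists_eq_initTableau_tableauRow (z (initTableau f (k, 0)))
  obtain ⟨i', hi'⟩ := exists_eq_initTableau_tableauRow (z (initTableau f (k, 1)))
  rw [hrow] at hi'
  have hne : i ≠ i' := by
    rintro rfl
    simpa using z.injective (hi.trans hi'.symm)
  refine ⟨j, ?_⟩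
  rw [hi, hi']
  fin_cases i <;> fin_cases i'
  all_goals first
    | exact absurd rfl hne
    | exact Or.inl ⟨rfl, rfl⟩
    | exact Or.inr ⟨rfl, rfl⟩

lemma eq_one_of_fixes_firstCol (hz : z ∈ fiberPreserving tableauRow)
    (h : ∀ k, z (initTableau f (k, 0)) = initTableau f (k, 0)) : z = 1 := by
  ext1 a
  obtain ⟨⟨k, i⟩, rfl⟩ := (initTableau f).surjective a
  obtain ⟨j, ⟨h0, h1⟩ | ⟨h0, -⟩⟩ := exists_row_of_mem_fiberPreserving hz k
  · obtain rfl : j = k := by simpa [h k] using h0.symm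
    fin_cases i
    · exact h0
    · exact h1
  · simp [h k] at h0

theorem IsSortedTableau.eq_one_of_mul {d : Perm (Fin (2 * f))} (hd : IsSortedTableau d)
    (hdz : IsSortedTableau (d * z)) (hz : z ∈ fiberPreserving tableauRow) : z = 1 := by
  have firstCol : ∀ k, z (initTableau f (k, 0)) =
      initTableau f (tableauRow (z (initTableau f (k, 0))), 0) := by
    intro k
    obtain ⟨j, ⟨h0, -⟩ | ⟨h0, h1⟩⟩ := exists_row_of_mem_fiberPreserving hz k
    · simp [h0]
    · have := hdz.row_lt k
      rw [Perm.mul_apply, Perm.mul_apply, h0, h1] at this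
      exact absurd (hd.row_lt j) this.not_gt
  set J := fun k => tableauRow (z (initTableau f (k, 0)))
  have hJ : Function.Injective J := fun k l hkl => by
    have hzkl : z (initTableau f (k, 0)) = z (initTableau f (l, 0)) := by
      rw [firstCol k, firstCol l]
      exact congrArg (fun j => initTableau f (j, 0)) hkl
    simpa using z.injective hzkl
  have hcomp : (fun k => (d * z) (initTableau f (k, 0))) =
      (fun k => d (initTableau f (k, 0))) ∘ J :=
    funext fun k => by rw [Perm.mul_apply, firstCol k]; rfl
  have hJid : J = id := by
    have := (hdz.firstCol_strictMono.range_inj hd.firstCol_strictMono).mp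
      (by rw [hcomp, (Finite.injective_iff_surjective.mp hJ).range_comp])
    rw [hcomp] at this
    exact hd.firstCol_strictMono.injective.comp_left this
  exact eq_one_of_fixes_firstCol hz fun k =>
    (firstCol k).trans (congrArg (fun j => initTableau f (j, 0)) (congrFun hJid k))

end Uniqueness

end Tableau

/-- The paper composes permutations left to right, so its coset element `ψ·d` is `d * ψ`
here. -/
theorem S2f_coset_decomposition_general (f : ℕ) :
    ∀ w : Equiv.Perm (Fin (2*f)),
      ∃! d : Equiv.Perm (Fin (2*f)),
        DfP (2*f) f d ∧ ∃ ψ, PsiP (2*f) f ψ ∧ w = d * ψ := by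
  intro w
  simp only [dfP_iff_isSortedTableau, psiP_iff_mem_fiberPreserving]
  obtain ⟨z, hz, hwz⟩ := exists_isSortedTableau_mul w
  refine ⟨w * z, ⟨hwz, z⁻¹, inv_mem hz, by group⟩, ?_⟩
  rintro d ⟨hd, ψ, hψ, rfl⟩
  rw [mul_assoc] at hwz ⊢
  rw [hd.eq_one_of_mul hwz (mul_mem hψ hz), mul_one]

/-- `S_{2f}` is the disjoint union of the cosets `Ψ·d`, `d ∈ D_f`:
every `w ∈ S_{2f}` lies in `Ψ·d` for exactly one `d ∈ D_f`.  (Products of permutations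
are written with the leftmost factor acting first, so `ψ·d` is `d * ψ` in Lean's
convention.) -/
theorem S2f_coset_decomposition (f : ℕ) (hf : 1 ≤ f) :
    ∀ w : Equiv.Perm (Fin (2*f)),
      ∃! d : Equiv.Perm (Fin (2*f)),
        DfP (2*f) f d ∧ ∃ ψ, PsiP (2*f) f ψ ∧ w = d * ψ :=
  S2f_coset_decomposition_general f

end SpBrauer
end
end

section
/- Let 0 ≤ f ≤ ⌊n/2⌋. Then D_{ν_f} is the disjoint union of the sets D_f·d_J over all 2f-element subsets J of {1,…,n}: D_{ν_f} = ⊔_{J∈P_f} D_f d_J. -/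
open scoped BigOperators Classical
open MulOpposite

noncomputable section

namespace SpBrauer

/-- two strictly monotone maps from `Fin k` into a `k`-element finset coincide. -/
lemma agreeOn {α : Type*} [LinearOrder α] {k : ℕ} {J : Finset α} (hJ : J.card = k)
    {u v : Fin k → α} (hu : StrictMono u) (hv : StrictMono v)
    (huJ : ∀ i, u i ∈ J) (hvJ : ∀ i, v i ∈ J) : u = v := by
  rw [Finset.orderEmbOfFin_unique hJ huJ hu, Finset.orderEmbOfFin_unique hJ hvJ hv]

/-- consecutive-step monotonicity on the high positions implies full monotonicity there. -/
lemma highMono {n f : ℕ} {d : Equiv.Perm (Fin n)}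
    (h : ∀ a b : Fin n, 2*f ≤ (a:ℕ) → (b:ℕ) = (a:ℕ)+1 → d a < d b) :
    ∀ a b : Fin n, 2*f ≤ (a:ℕ) → (a:ℕ) < (b:ℕ) → d a < d b := by
  intro a b ha hab
  obtain ⟨k, hk⟩ : ∃ k, (b:ℕ) = (a:ℕ) + k + 1 := ⟨(b:ℕ) - (a:ℕ) - 1, by omega⟩
  induction k generalizing b with
  | zero => exact h a b ha (by omega)
  | succ k ih =>
    have hb' : (a:ℕ)+k+1 < n := by have := b.isLt; omega
    exact lt_trans (ih ⟨(a:ℕ)+k+1, hb'⟩ (by simp) rfl)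
      (h ⟨(a:ℕ)+k+1, hb'⟩ b (by simp; omega) (by simp; omega))

/-- a permutation fixing the high positions maps low positions to low positions. -/
lemma lowlow {n f : ℕ} {σ : Equiv.Perm (Fin n)} (hfix : ∀ a : Fin n, 2*f ≤ (a:ℕ) → σ a = a) :
    ∀ a : Fin n, (a:ℕ) < 2*f → ((σ a : ℕ)) < 2*f := by
  intro a ha
  by_contra hc
  push_neg at hc
  have h2 : σ a = a := σ.injective (hfix (σ a) hc)
  rw [h2] at hc
  omega


/-- `D_{ν_f}` is the disjoint union of the sets `D_f·d_J` over all
`2f`-element subsets `J ⊆ {1, …, n}`:  `d ∈ D_{ν_f}` iff `d = d_1·d_J` for some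
(necessarily unique) `J ∈ P_f` and `d_1 ∈ D_f`.  (Products of permutations are written
with the leftmost factor acting first, so `d_1·d_J` is `d_J * d_1` in Lean's
convention.) -/
theorem Dnu_coset_decomposition (n f : ℕ) (hf : 2*f ≤ n) :
    (∀ d : Equiv.Perm (Fin n), DnuP n f d ↔
       ∃ (J : Finset (Fin n)) (d1 dJ : Equiv.Perm (Fin n)),
         J.card = 2*f ∧ DfP n f d1 ∧ IsdJ n f J dJ ∧ d = dJ * d1) ∧
    (∀ (J J' : Finset (Fin n)) (d1 d1' dJ dJ' : Equiv.Perm (Fin n)),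
       J.card = 2*f → J'.card = 2*f → DfP n f d1 → DfP n f d1' →
       IsdJ n f J dJ → IsdJ n f J' dJ' → dJ * d1 = dJ' * d1' → J = J' ∧ d1 = d1') := by
  constructor
  · intro d
    constructor
    · rintro ⟨h1, h2, h3⟩
      -- the set J of values of d on the low positions
      set F : Fin (2*f) → Fin n := fun i => d ⟨(i:ℕ), lt_of_lt_of_le i.isLt hf⟩ with hF
      have hFinj : Function.Injective F := by
        intro i j hij
        have h := d.injective hij
        exact Fin.ext (Fin.mk.inj h)
      set J : Finset (Fin n) := Finset.image F Finset.univ with hJdef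
      have hJcard : J.card = 2*f := by
        rw [hJdef, Finset.card_image_of_injective _ hFinj, Finset.card_univ, Fintype.card_fin]
      have hJc : Jᶜ.card = n - 2*f := by
        rw [Finset.card_compl, hJcard, Fintype.card_fin]
      have hmemJ : ∀ a : Fin n, (a:ℕ) < 2*f → d a ∈ J := by
        intro a ha
        rw [hJdef]
        exact Finset.mem_image.2 ⟨⟨(a:ℕ), ha⟩, Finset.mem_univ _, rfl⟩
      have hmemJc : ∀ a : Fin n, 2*f ≤ (a:ℕ) → d a ∉ J := by
        intro a ha hmem
        rw [hJdef] at hmem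
        obtain ⟨i, -, hi⟩ := Finset.mem_image.1 hmem
        have h := d.injective hi
        have h2 : (i:ℕ) = (a:ℕ) := congrArg Fin.val h
        have := i.isLt
        omega
      -- construct dJ
      set g : Fin n → Fin n := fun a =>
        if h : (a:ℕ) < 2*f then J.orderEmbOfFin hJcard ⟨(a:ℕ), h⟩
        else Jᶜ.orderEmbOfFin hJc ⟨(a:ℕ) - 2*f, by have := a.isLt; omega⟩ with hg
      have hglow : ∀ (a : Fin n) (h : (a:ℕ) < 2*f),
          g a = J.orderEmbOfFin hJcard ⟨(a:ℕ), h⟩ := by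
        intro a h; rw [hg]; simp only [dif_pos h]
      have hghigh : ∀ (a : Fin n) (h : ¬ (a:ℕ) < 2*f),
          g a = Jᶜ.orderEmbOfFin hJc ⟨(a:ℕ) - 2*f, by have := a.isLt; omega⟩ := by
        intro a h; rw [hg]; simp only [dif_neg h]
      have hglowmem : ∀ a : Fin n, (a:ℕ) < 2*f → g a ∈ J := by
        intro a h; rw [hglow a h]; exact Finset.orderEmbOfFin_mem _ _ _
      have hghighmem : ∀ a : Fin n, 2*f ≤ (a:ℕ) → g a ∈ Jᶜ := by
        intro a h; rw [hghigh a (by omega)]; exact Finset.orderEmbOfFin_mem _ _ _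
      have hginj : Function.Injective g := by
        intro a b hab
        by_cases ha : (a:ℕ) < 2*f <;> by_cases hb : (b:ℕ) < 2*f
        · rw [hglow a ha, hglow b hb] at hab
          have h := (J.orderEmbOfFin hJcard).injective hab
          exact Fin.ext (Fin.mk.inj h)
        · exact absurd ((hab ▸ hglowmem a ha)) (Finset.mem_compl.1 (hghighmem b (by omega)))
        · exact absurd ((hab.symm ▸ hglowmem b hb)) (Finset.mem_compl.1 (hghighmem a (by omega)))
        · rw [hghigh a ha, hghigh b hb] at hab
          have h := (Jᶜ.orderEmbOfFin hJc).injective hab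
          have h2 : (a:ℕ) - 2*f = (b:ℕ) - 2*f := congrArg Fin.val h
          exact Fin.ext (by omega)
      set dJ : Equiv.Perm (Fin n) :=
        Equiv.ofBijective g (Finite.injective_iff_bijective.mp hginj) with hdJdef
      have hdJg : ∀ a, dJ a = g a := fun a => rfl
      have hdJm1 : ∀ a b : Fin n, (a:ℕ) < (b:ℕ) → (b:ℕ) < 2*f → dJ a < dJ b := by
        intro a b hab hb
        rw [hdJg, hdJg, hglow a (by omega), hglow b hb]
        exact (J.orderEmbOfFin hJcard).strictMono (Fin.mk_lt_mk.mpr (by omega))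
      have hdJm2 : ∀ a b : Fin n, 2*f ≤ (a:ℕ) → (a:ℕ) < (b:ℕ) → dJ a < dJ b := by
        intro a b ha hab
        rw [hdJg, hdJg, hghigh a (by omega), hghigh b (by omega)]
        exact (Jᶜ.orderEmbOfFin hJc).strictMono (Fin.mk_lt_mk.mpr (by omega))
      have hIsdJ : IsdJ n f J dJ := by
        refine ⟨fun a => ⟨fun h => hdJg a ▸ hglowmem a h,
          fun h => Finset.mem_compl.1 (hdJg a ▸ hghighmem a h)⟩, hdJm1, hdJm2⟩
      -- dJ agrees with d on the high positions
      have hdmonoHigh := highMono (f := f) h3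
      have hagreeHigh : ∀ a : Fin n, 2*f ≤ (a:ℕ) → dJ a = d a := by
        have key := agreeOn (α := Fin n) hJc
          (u := fun i : Fin (n-2*f) => dJ ⟨2*f + (i:ℕ), by have := i.isLt; omega⟩)
          (v := fun i : Fin (n-2*f) => d ⟨2*f + (i:ℕ), by have := i.isLt; omega⟩)
          (fun i j hij => hdJm2 _ _ (by simp) (by simp; exact Fin.lt_def.mp hij))
          (fun i j hij => hdmonoHigh _ _ (by simp) (by simp; exact Fin.lt_def.mp hij))
          (fun i => hghighmem _ (by simp))
          (fun i => Finset.mem_compl.2 (hmemJc _ (by simp)))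
        intro a ha
        have h := congrFun key ⟨(a:ℕ) - 2*f, by have := a.isLt; omega⟩
        have hval : (⟨2*f + ((a:ℕ) - 2*f), by have := a.isLt; omega⟩ : Fin n) = a :=
          Fin.ext (by simp; omega)
        simpa [hval] using h
      -- define d1
      set d1 : Equiv.Perm (Fin n) := dJ⁻¹ * d with hd1def
      have hd1app : ∀ a, d1 a = dJ⁻¹ (d a) := fun a => rfl
      have hfixhigh : ∀ a : Fin n, 2*f ≤ (a:ℕ) → d1 a = a := by
        intro a ha
        rw [hd1app, ← hagreeHigh a ha]
        exact dJ.symm_apply_apply a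
      have hd1low := lowlow (f := f) hfixhigh
      have hdJeq : ∀ a, dJ (d1 a) = d a := by
        intro a
        rw [hd1app]
        exact dJ.apply_symm_apply (d a)
      have pull : ∀ a b : Fin n, (a:ℕ) < 2*f → (b:ℕ) < 2*f → d a < d b → d1 a < d1 b := by
        intro a b ha hb hab
        rcases lt_trichotomy (d1 a) (d1 b) with h | h | h
        · exact h
        · exact absurd hab (by rw [d1.injective h]; exact lt_irrefl _)
        · exfalso
          have h4 := hdJm1 (d1 b) (d1 a) (Fin.lt_def.mp h) (hd1low a ha)
          rw [hdJeq, hdJeq] at h4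
          exact absurd hab (not_lt.2 (le_of_lt h4))
      refine ⟨J, d1, dJ, hJcard, ⟨⟨?_, ?_, ?_⟩, hfixhigh⟩, hIsdJ, (mul_inv_cancel_left dJ d).symm⟩
      · intro a b hae hb hb2f
        exact pull a b (by omega) (by omega) (h1 a b hae hb hb2f)
      · intro a b hae hbe hab hb2f
        exact pull a b (by omega) (by omega) (h2 a b hae hbe hab hb2f)
      · intro a b ha hb
        rw [hfixhigh a ha, hfixhigh b (by omega)]
        exact Fin.lt_def.mpr (by omega)
    · rintro ⟨J, d1, dJ, hJcard, ⟨⟨c1, c2, c3⟩, hfix⟩, ⟨hmem, hm1, hm2⟩, rfl⟩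
      have hll := lowlow (f := f) hfix
      refine ⟨?_, ?_, ?_⟩
      · intro a b hae hb hb2f
        have h := c1 a b hae hb hb2f
        simp only [Equiv.Perm.mul_apply]
        exact hm1 (d1 a) (d1 b) (Fin.lt_def.mp h) (hll b (by omega))
      · intro a b hae hbe hab hb2f
        have h := c2 a b hae hbe hab hb2f
        simp only [Equiv.Perm.mul_apply]
        exact hm1 (d1 a) (d1 b) (Fin.lt_def.mp h) (hll b (by omega))
      · intro a b ha hb
        simp only [Equiv.Perm.mul_apply]
        rw [hfix a ha, hfix b (by omega)]
        exact hm2 a b ha (by omega)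
  · intro J J' d1 d1' dJ dJ' hJ hJ' hd1 hd1' hdJ hdJ' heq
    obtain ⟨hmem, hm1, hm2⟩ := hdJ
    obtain ⟨hmem', hm1', hm2'⟩ := hdJ'
    have hll := lowlow (f := f) hd1.2
    have hll' := lowlow (f := f) hd1'.2
    have hchar : ∀ (K : Finset (Fin n)) (e1 eK : Equiv.Perm (Fin n)),
        (∀ a : Fin n, 2*f ≤ (a:ℕ) → e1 a = a) →
        (∀ a : Fin n, ((a:ℕ) < 2*f → eK a ∈ K) ∧ (2*f ≤ (a:ℕ) → eK a ∉ K)) →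
        ∀ x : Fin n, x ∈ K ↔ (( (eK * e1)⁻¹ x : Fin n) : ℕ) < 2*f := by
      intro K e1 eK he1 heK x
      have hle := lowlow (f := f) he1
      set a := (eK * e1)⁻¹ x with hadef
      have h2 : eK (e1 a) = x := Equiv.apply_symm_apply (eK * e1) x
      constructor
      · intro hx
        by_contra hc
        push_neg at hc
        rw [he1 a hc] at h2
        rw [← h2] at hx
        exact (heK a).2 hc hx
      · intro hx
        have h3 := (heK (e1 a)).1 (hle a hx)
        rwa [h2] at h3
    have hJJ : J = J' := by
      ext x
      rw [hchar J d1 dJ hd1.2 hmem x, hchar J' d1' dJ' hd1'.2 hmem' x, heq]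
    subst hJJ
    have hlowagree := agreeOn (α := Fin n) hJ
      (u := fun i : Fin (2*f) => dJ ⟨(i:ℕ), lt_of_lt_of_le i.isLt hf⟩)
      (v := fun i : Fin (2*f) => dJ' ⟨(i:ℕ), lt_of_lt_of_le i.isLt hf⟩)
      (fun i j hij => hm1 _ _ (by simp; exact Fin.lt_def.mp hij) (by simp [j.isLt]))
      (fun i j hij => hm1' _ _ (by simp; exact Fin.lt_def.mp hij) (by simp [j.isLt]))
      (fun i => (hmem _).1 (by simp [i.isLt]))
      (fun i => (hmem' _).1 (by simp [i.isLt]))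
    have hJc : Jᶜ.card = n - 2*f := by
      rw [Finset.card_compl, hJ, Fintype.card_fin]
    have hhighagree := agreeOn (α := Fin n) hJc
      (u := fun i : Fin (n-2*f) => dJ ⟨2*f + (i:ℕ), by have := i.isLt; omega⟩)
      (v := fun i : Fin (n-2*f) => dJ' ⟨2*f + (i:ℕ), by have := i.isLt; omega⟩)
      (fun i j hij => hm2 _ _ (by simp) (by simp; exact Fin.lt_def.mp hij))
      (fun i j hij => hm2' _ _ (by simp) (by simp; exact Fin.lt_def.mp hij))
      (fun i => Finset.mem_compl.2 ((hmem _).2 (by simp)))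
      (fun i => Finset.mem_compl.2 ((hmem' _).2 (by simp)))
    have hdJdJ' : dJ = dJ' := by
      apply Equiv.ext
      intro a
      by_cases ha : (a:ℕ) < 2*f
      · have h := congrFun hlowagree ⟨(a:ℕ), ha⟩
        simpa using h
      · have h := congrFun hhighagree ⟨(a:ℕ) - 2*f, by have := a.isLt; omega⟩
        have hval : (⟨2*f + ((a:ℕ) - 2*f), by have := a.isLt; omega⟩ : Fin n) = a :=
          Fin.ext (by simp; omega)
        simpa [hval] using h
    subst hdJdJ'
    exact ⟨rfl, mul_left_cancel heq⟩


end SpBrauer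
end
end

section
/- Let K be a field, m ≥ n, 1 ≤ f ≤ ⌊n/2⌋, k ∈ I_f, and v := v_c ⊗ v_k ∈ V^{⊗n} where c := (1,1',2,2',…,f,f'). Let 1 ≠ d ∈ S_n. If either d ∉ S_{(2f,n−2f)} or d ∈ D_f, then d^{−1} z E_f ∈ ann(v) for every z ∈ Ψ, i.e. v·(d^{−1} z E_f) = 0. -/
open scoped BigOperators Classical
open MulOpposite

noncomputable section

namespace SpBrauer

/-!
The operator `E_f = e_1 e_3 ⋯ e_{2f-1}` is a product of operators acting on disjoint pairs of
positions, and `e_{2r+1}` kills every basis tensor whose entries at positions `2r+1, 2r+2` are not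
partners `i, i'` (i.e. `ε = 0`); since the other factors do not touch these positions, such a
tensor is killed by `E_f`. Now `v · d⁻¹ z = ± v_a` with `a = c ∘ d ∘ z⁻¹`, and among the entries of
`v = v_c ⊗ v_k` (with `k ∈ I_f`) the only partners are the two entries of a row of `c`. As `z ∈ Ψ`
permutes the rows, `v · d⁻¹ z E_f ≠ 0` forces `d` to map rows to rows. Then
`d ∈ S_{(2f, n-2f)}`, so `d ∈ D_f` by hypothesis, and an element of `D_f` mapping rows to rows
is `1`, since the first column of `t^{ν_f} · d` is increasing.
-/

lemma permOp_dta (R : Type) [CommRing R] (m n : ℕ) (π : Equiv.Perm (Fin n))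
    (i : Fin n → Fin (2*m)) :
    permOp R m n π (dta R m n i) = ((Equiv.Perm.sign π : ℤ) : R) • dta R m n (i ∘ ⇑π⁻¹) := by
  funext b
  simp only [permOp, funMap, dta, LinearMap.coe_mk, AddHom.coe_mk, mul_ite, mul_one, mul_zero,
    Finset.sum_ite_eq', Finset.mem_univ, if_true, Pi.smul_apply, smul_eq_mul, Equiv.Perm.coe_inv,
    Equiv.eq_comp_symm, eq_comm (a := i)]

lemma epsZ_swap (m : ℕ) (i j : Fin (2*m)) : epsZ m j i = -epsZ m i j := by
  unfold epsZ
  split_ifs <;> omega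

def pairEps (m n : ℕ) (j : Fin (n-1)) (a : Fin n → Fin (2*m)) : ℤ :=
  epsZ m (a ⟨j, by omega⟩) (a ⟨j+1, by omega⟩)

def PairEpsVanishes {R : Type} [CommRing R] {m n : ℕ} (j : Fin (n-1)) (x : Ten R m n) : Prop :=
  ∀ a, x a ≠ 0 → pairEps m n j a = 0

section
variable {R : Type} [CommRing R] {m n : ℕ}

lemma eOp_eq_zero_of_pairEpsVanishes {j : Fin (n-1)} {x : Ten R m n}
    (hx : PairEpsVanishes j x) : eOp R m n j x = 0 := by
  funext b
  refine Finset.sum_eq_zero fun a _ => ?_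
  by_cases h : x a = 0
  · rw [h, mul_zero]
  · have hε := hx a h
    simp only [pairEps] at hε
    simp [hε]

lemma pairEpsVanishes_eOp {j s : Fin (n-1)} (hjs : (j:ℕ)+1 < s ∨ (s:ℕ)+1 < j) {x : Ten R m n}
    (hx : PairEpsVanishes j x) : PairEpsVanishes j (eOp R m n s x) := by
  intro b hb
  by_contra hne
  refine hb (Finset.sum_eq_zero fun a _ => ?_)
  dsimp only
  split_ifs with hab
  · have hxa : x a = 0 := by
      by_contra hxa
      refine hne ?_
      rw [← hx a hxa, pairEps, pairEps, hab, hab] <;> simp [Fin.ext_iff] <;> omega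
    rw [hxa, mul_zero]
  · simp

lemma pairEpsVanishes_prod_map_eOp {j : Fin (n-1)} {L : List (Fin (n-1))}
    (hL : ∀ s ∈ L, (j:ℕ)+1 < s ∨ (s:ℕ)+1 < j) {x : Ten R m n} (hx : PairEpsVanishes j x) :
    PairEpsVanishes j ((L.map (eOp R m n)).prod x) := by
  induction L with
  | nil => simpa using hx
  | cons s L ih =>
    simp only [List.forall_mem_cons] at hL
    simpa using pairEpsVanishes_eOp hL.1 (ih hL.2)

lemma prod_map_eOp_eq_zero {j : Fin (n-1)} {L : List (Fin (n-1))} (hj : j ∈ L)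
    (hL : ∀ s ∈ L, s = j ∨ (j:ℕ)+1 < s ∨ (s:ℕ)+1 < j) {x : Ten R m n}
    (hx : PairEpsVanishes j x) : (L.map (eOp R m n)).prod x = 0 := by
  induction L with
  | nil => simp at hj
  | cons s L ih =>
    simp only [List.forall_mem_cons] at hL
    rw [List.map_cons, List.prod_cons, Module.End.mul_apply]
    by_cases hjL : j ∈ L
    · rw [ih hjL hL.2, map_zero]
    · obtain rfl : s = j := by simpa [hjL, eq_comm] using hj
      refine eOp_eq_zero_of_pairEpsVanishes (pairEpsVanishes_prod_map_eOp (fun t ht => ?_) hx)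
      exact (hL.2 t ht).resolve_left fun h => hjL (h ▸ ht)

lemma pairEpsVanishes_dta {j : Fin (n-1)} {a : Fin n → Fin (2*m)} (h : pairEps m n j a = 0) :
    PairEpsVanishes j (dta R m n a) := by
  intro b hb
  by_cases hba : b = a
  · rwa [hba]
  · simp [dta, hba] at hb

lemma EfOp_eq_zero_of_pairEpsVanishes {f : ℕ} (hf : 2*f ≤ n) {r : ℕ} (hr : r < f)
    {x : Ten R m n} (hx : PairEpsVanishes ⟨2*r, by omega⟩ x) : EfOp R m n f hf x = 0 := by
  have hEf : EfOp R m n f hf =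
      ((List.ofFn fun i : Fin f => (⟨2*i, by omega⟩ : Fin (n-1))).map (eOp R m n)).prod := by
    rw [List.map_ofFn]; rfl
  rw [hEf]
  refine prod_map_eOp_eq_zero (List.mem_ofFn.2 ⟨⟨r, hr⟩, rfl⟩) (fun s hs => ?_) hx
  obtain ⟨i, rfl⟩ := List.mem_ofFn.1 hs
  by_cases hir : (i:ℕ) = r
  · exact Or.inl (Fin.ext (by simp [hir]))
  · right; simp only; omega

end

/-- `p ≠ q` lie in a common row of the initial `(2^f)`-tableau; with 0-based positions the
rows are `{2t, 2t+1}`, `t < f`. -/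
def IsRowPair (f : ℕ) {n : ℕ} (p q : Fin n) : Prop :=
  p ≠ q ∧ (p:ℕ)/2 = (q:ℕ)/2 ∧ (p:ℕ) < 2*f

lemma EfOp_dta_eq_zero (R : Type) [CommRing R] {m n f : ℕ} (hf : 2*f ≤ n)
    {a : Fin n → Fin (2*m)} {p q : Fin n} (hpq : IsRowPair f p q) (h : epsZ m (a p) (a q) = 0) :
    EfOp R m n f hf (dta R m n a) = 0 := by
  obtain ⟨hne, hdiv, hp⟩ := hpq
  have hr : (p:ℕ)/2 < f := by omega
  refine EfOp_eq_zero_of_pairEpsVanishes hf hr (pairEpsVanishes_dta ?_)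
  have hne' := Fin.val_ne_of_ne hne
  rw [pairEps]
  rcases Nat.mod_two_eq_zero_or_one p with hp2 | hp2
  · convert h using 2 <;> congr 1 <;> ext <;> simp only <;> omega
  · rw [epsZ_swap, neg_eq_zero]
    convert h using 2 <;> congr 1 <;> ext <;> simp only <;> omega

section
variable {n f : ℕ}

lemma exists_isRowPair (hfn : 2*f ≤ n) {p : Fin n} (hp : (p:ℕ) < 2*f) : ∃ q, IsRowPair f p q :=
  ⟨⟨2*(p/2) + 1 - p%2, by omega⟩, by simp only [IsRowPair, ne_eq, Fin.ext_iff]; omega⟩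

lemma IsRowPair.rowStabP_swap {p q : Fin n} (h : IsRowPair f p q) :
    RowStabP n f (Equiv.swap p q) := by
  obtain ⟨-, hdiv, hp⟩ := h
  refine ⟨fun a ha => Equiv.swap_apply_of_ne_of_ne ?_ ?_, fun a => ?_⟩
  · rintro rfl; omega
  · rintro rfl; omega
  · rcases eq_or_ne a p with rfl | hap
    · simp [hdiv]
    rcases eq_or_ne a q with rfl | haq
    · simp [hdiv]
    rw [Equiv.swap_apply_of_ne_of_ne hap haq]

lemma FixHigh.lt_of_lt {σ : Equiv.Perm (Fin n)} (hσ : FixHigh n f σ) {p : Fin n}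
    (hp : (p:ℕ) < 2*f) : (σ p : ℕ) < 2*f := by
  by_contra h
  have hfix : σ p = p := σ.injective (hσ (σ p) (not_lt.1 h))
  rw [hfix] at h
  exact h hp

lemma PsiP.isRowPair_apply {z : Equiv.Perm (Fin n)} (hz : PsiP n f z) {p q : Fin n}
    (h : IsRowPair f p q) : IsRowPair f (z p) (z q) := by
  have hrow := ((hz.2 _).1 h.rowStabP_swap).2 (z p)
  simp only [Equiv.Perm.mul_apply, Equiv.Perm.inv_def, Equiv.symm_apply_apply,
    Equiv.swap_apply_left] at hrow
  exact ⟨z.injective.ne h.1, hrow.symm, hz.1.lt_of_lt h.2.2⟩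

lemma blockP_of_lt {d : Equiv.Perm (Fin n)} (h : ∀ a : Fin n, (a:ℕ) < 2*f → (d a : ℕ) < 2*f) :
    BlockP n f d := by
  intro a
  refine ⟨h a, fun hda => ?_⟩
  have hbij := (Set.toFinite {b : Fin n | (b:ℕ) < 2*f}).injOn_iff_bijOn_of_mapsTo
    (f := d) h |>.1 d.injective.injOn
  obtain ⟨b, hb, hba⟩ := hbij.surjOn hda
  exact d.injective hba ▸ hb

lemma blockP_of_isRowPair_apply (hfn : 2*f ≤ n) {d : Equiv.Perm (Fin n)}
    (hrow : ∀ p q, IsRowPair f p q → IsRowPair f (d p) (d q)) : BlockP n f d :=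
  blockP_of_lt fun _ hp =>
    have ⟨_, hpq⟩ := exists_isRowPair hfn hp
    (hrow _ _ hpq).2.2

lemma isRowPair_of_epsZ_cIdx_ne_zero {m : ℕ} (hfm : f ≤ m) {kk : Fin n → Fin (2*m)}
    (hkk : IfP m n f kk) {p q : Fin n}
    (h : epsZ m (cIdx m n f hfm kk p) (cIdx m n f hfm kk q) ≠ 0) : IsRowPair f p q := by
  have hkp := hkk p
  have hkq := hkk q
  have hsum : (cIdx m n f hfm kk p : ℕ) + cIdx m n f hfm kk q + 1 = 2*m := by
    by_contra hc
    exact h (if_neg hc)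
  simp only [IsRowPair, ne_eq, Fin.ext_iff]
  simp only [cIdx, conjIdx, apply_dite Fin.val, apply_ite Fin.val] at hsum
  split_ifs at hsum <;> omega

lemma eq_one_of_isRowPair_apply (hfn : 2*f ≤ n) {d : Equiv.Perm (Fin n)}
    (hD : DfP n f d) (hrow : ∀ p q, IsRowPair f p q → IsRowPair f (d p) (d q)) : d = 1 := by
  obtain ⟨⟨hrowlt, hcol, -⟩, hfix⟩ := hD
  have hpair : ∀ p q : Fin n, (p:ℕ) % 2 = 0 → (q:ℕ) = p + 1 → (q:ℕ) < 2*f →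
      (d p : ℕ) % 2 = 0 ∧ (d q : ℕ) = d p + 1 ∧ (d p : ℕ) < 2*f := by
    intro p q hp hq hqf
    have hlt : (d p : ℕ) < d q := hrowlt p q hp hq hqf
    obtain ⟨-, hdiv, hdp⟩ := hrow p q ⟨by simp [Fin.ext_iff]; omega, by omega, by omega⟩
    omega
  let e (t : Fin f) : Fin n := ⟨2*t, by omega⟩
  have he (t : Fin f) :=
    hpair (e t) ⟨2*t+1, by omega⟩ (by simp [e]) (by simp [e]) (by simp only; omega)
  -- `d` maps row `t` onto row `T t`, and the increasing first column makes `T` strictly monotone.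
  let T (t : Fin f) : Fin f := ⟨(d (e t) : ℕ)/2, by have := he t; omega⟩
  have hT : StrictMono T := fun s t hst => by
    have := hcol (e s) (e t) (by simp [e]) (by simp [e]) (by simp only [e]; omega)
      (by simp only [e]; omega)
    have := he s; have := he t
    simp only [T, Fin.mk_lt_mk]; omega
  have hTid (t : ℕ) (ht : t < f) : (d (e ⟨t, ht⟩) : ℕ)/2 = t :=
    congrArg Fin.val (congrFun hT.eq_id ⟨t, ht⟩)
  ext a
  by_cases ha : 2*f ≤ (a:ℕ)
  · rw [hfix a ha, Equiv.Perm.one_apply]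
  have ht : (a:ℕ)/2 < f := by omega
  have hid := hTid (a/2) ht
  have hea := he ⟨a/2, ht⟩
  rw [Equiv.Perm.one_apply]
  rcases Nat.mod_two_eq_zero_or_one a with ha2 | ha2
  · have hae : e ⟨a/2, ht⟩ = a := Fin.ext (by simp only [e]; omega)
    rw [hae] at hid hea
    omega
  · have hodd := hpair (e ⟨a/2, ht⟩) a (by simp [e]) (by simp only [e]; omega) (by omega)
    omega

end

/-- Let `m ≥ n`, `1 ≤ f ≤ ⌊n/2⌋`, `k ∈ I_f` and
`v = v_c ⊗ v_k ∈ V^{⊗n}`.  If `1 ≠ d ∈ S_n` with either `d ∉ S_{(2f, n-2f)}` or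
`d ∈ D_f`, then `v · (d^{-1} z E_f) = 0` for every `z ∈ Ψ`. -/
theorem annihilation_lemma
    (K : Type) [Field K] (m n f : ℕ) (hmn : n ≤ m) (hfn : 2*f ≤ n)
    (kk : Fin n → Fin (2*m)) (hkk : IfP m n f kk)
    (d : Equiv.Perm (Fin n)) (hd1 : d ≠ 1)
    (hd : ¬ BlockP n f d ∨ DfP n f d)
    (z : Equiv.Perm (Fin n)) (hz : PsiP n f z) :
    (EfOp K m n f hfn) ((permOp K m n z) ((permOp K m n d⁻¹)
      (dta K m n (cIdx m n f (by omega) kk)))) = 0 := by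
  set c := cIdx m n f (by omega) kk
  rw [permOp_dta, map_smul, permOp_dta, map_smul, map_smul, inv_inv]
  suffices EfOp K m n f hfn (dta K m n ((c ∘ d) ∘ ⇑z⁻¹)) = 0 by rw [this, smul_zero, smul_zero]
  by_contra hne
  have hrow (p q : Fin n) (hpq : IsRowPair f p q) : IsRowPair f (d p) (d q) := by
    refine isRowPair_of_epsZ_cIdx_ne_zero (by omega) hkk fun h => hne ?_
    exact EfOp_dta_eq_zero K hfn (hz.isRowPair_apply hpq) (by simpa using h)
  have hD := hd.resolve_left (not_not.2 (blockP_of_isRowPair_apply hfn hrow))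
  exact hd1 (eq_one_of_isRowPair_apply hfn hD hrow)

end SpBrauer
end
end
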